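/- The operator 𝕂* has empty point spectrum: if f ∈ W* and λ ∈ ℂ satisfy 𝕂*f = λf, then f = 0. (Hence, since 𝕂* is unitarily equivalent to the Neumann–Poincaré operator on the intersecting disks, the latter has no eigenvalues on H₀^{−1/2}.) -/

import Mathlib

open Real Filter Topology Set MeasureTheory
open scoped ComplexInnerProductSpace

/-- The weight `p₁`. -/
noncomputable def p1 (θ₀ : ℝ) (s : ℝ) : ℝ :=
  if s = 0 then θ₀ * (π - θ₀) / π
  else Real.sinh (s * θ₀) * Real.sinh (s * (π - θ₀)) / (s * Real.sinh (s * π))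

/-- The weight `p₂`. -/
noncomputable def p2 (θ₀ : ℝ) (s : ℝ) : ℝ :=
  Real.cosh (s * θ₀) * Real.cosh (s * (π - θ₀)) / (s * Real.sinh (s * π))

/-- The symbol `η`. -/
noncomputable def eta (θ₀ : ℝ) (s : ℝ) : ℝ :=
  if s = 0 then 1 / 2 - θ₀ / π
  else Real.sinh (s * (π - 2 * θ₀)) / (2 * Real.sinh (s * π))

/-- The measure `p₁(s) ds`. -/
noncomputable def mu1 (θ₀ : ℝ) : Measure ℝ :=
  (volume : Measure ℝ).withDensity fun s => ENNReal.ofReal (p1 θ₀ s)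

/-- The measure `p₂(s) ds`. -/
noncomputable def mu2 (θ₀ : ℝ) : Measure ℝ :=
  (volume : Measure ℝ).withDensity fun s => ENNReal.ofReal (p2 θ₀ s)

/-- The Hilbert space `W* = L²(ℝ, p₁ ds) ⊕ L²(ℝ, p₂ ds)` (ℓ²-direct sum). -/
noncomputable abbrev WStar (θ₀ : ℝ) :=
  WithLp 2 (Lp ℂ 2 (mu1 θ₀) × Lp ℂ 2 (mu2 θ₀))

/-- First component of an element of `W*`. -/
noncomputable def comp1 {θ₀ : ℝ} (f : WStar θ₀) : Lp ℂ 2 (mu1 θ₀) :=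
  (WithLp.equiv 2 (Lp ℂ 2 (mu1 θ₀) × Lp ℂ 2 (mu2 θ₀)) f).1

/-- Second component of an element of `W*`. -/
noncomputable def comp2 {θ₀ : ℝ} (f : WStar θ₀) : Lp ℂ 2 (mu2 θ₀) :=
  (WithLp.equiv 2 (Lp ℂ 2 (mu1 θ₀) × Lp ℂ 2 (mu2 θ₀)) f).2

/-- `T` acts as `𝕂*(f₁, f₂) = (η·f₁, −η·f₂)`. -/
def IsNPMult (θ₀ : ℝ) (T : WStar θ₀ →L[ℂ] WStar θ₀) : Prop :=
  ∀ f : WStar θ₀,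
    (comp1 (T f) : ℝ → ℂ) =ᵐ[mu1 θ₀] (fun s => (eta θ₀ s : ℂ) * (comp1 f : ℝ → ℂ) s) ∧
    (comp2 (T f) : ℝ → ℂ) =ᵐ[mu2 θ₀] (fun s => -(eta θ₀ s : ℂ) * (comp2 f : ℝ → ℂ) s)

/-!
On each summand `𝕂*` is multiplication by `±η`, so an eigenfunction with eigenvalue `λ` must vanish
off the level set `{η = ±λ}`. The symbol `η` is even and strictly decreasing on `(0, ∞)` (the ratio
`sinh(s a) / sinh(s b)` decreases for `0 < a < b`), so its level sets have at most three points and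
are null for `p₁ ds` and `p₂ ds`, which are absolutely continuous.
-/

namespace Real

lemma sinh_lt_mul_cosh {x : ℝ} (hx : 0 < x) : sinh x < x * cosh x := by
  have hmono : StrictMonoOn (fun x => x * cosh x - sinh x) (Ici 0) := by
    refine strictMonoOn_of_deriv_pos (convex_Ici 0) (by fun_prop) fun y hy => ?_
    rw [interior_Ici] at hy
    have hd : HasDerivAt (fun x => x * cosh x - sinh x) (1 * cosh y + y * sinh y - cosh y) y :=
      ((hasDerivAt_id y).mul (hasDerivAt_cosh y)).sub (hasDerivAt_sinh y)
    rw [hd.deriv]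
    nlinarith [mul_pos (mem_Ioi.1 hy) (sinh_pos_iff.2 hy)]
  simpa using hmono self_mem_Ici hx.le hx

lemma strictMonoOn_sinh_div_self : StrictMonoOn (fun x => sinh x / x) (Ioi 0) := by
  refine strictMonoOn_of_deriv_pos (convex_Ioi 0)
    (continuous_sinh.continuousOn.div continuousOn_id fun x hx => ne_of_gt hx) fun x hx => ?_
  rw [interior_Ioi] at hx
  have hd : HasDerivAt (fun x => sinh x / x) ((cosh x * x - sinh x * 1) / x ^ 2) x :=
    (hasDerivAt_sinh x).div (hasDerivAt_id x) (ne_of_gt hx)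
  rw [hd.deriv]
  have := sinh_lt_mul_cosh hx
  exact div_pos (by nlinarith) (pow_pos hx 2)

/-- Equivalently, `tanh x / x` is strictly decreasing on `(0, ∞)`. -/
lemma mul_cosh_mul_sinh_lt {u v : ℝ} (hu : 0 < u) (huv : u < v) :
    u * (cosh u * sinh v) < v * (sinh u * cosh v) := by
  -- `sinh (v - u) / (v - u) < sinh (v + u) / (v + u)`, expanded by the addition formulas
  have h := strictMonoOn_sinh_div_self (mem_Ioi.2 (sub_pos.2 huv))
    (mem_Ioi.2 (by linarith : (0 : ℝ) < v + u)) (by linarith : v - u < v + u)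
  simp only at h
  rw [div_lt_div_iff₀ (by linarith) (by linarith), sinh_sub, sinh_add] at h
  nlinarith

lemma strictAntiOn_sinh_mul_div_sinh_mul {a b : ℝ} (ha : 0 < a) (hab : a < b) :
    StrictAntiOn (fun s => sinh (s * a) / sinh (s * b)) (Ioi 0) := by
  have hb : 0 < b := ha.trans hab
  refine strictAntiOn_of_deriv_neg (convex_Ioi 0)
    ((by fun_prop : Continuous fun s => sinh (s * a)).continuousOn.div (by fun_prop)
      fun s hs => ne_of_gt (sinh_pos_iff.2 (mul_pos hs hb))) fun s hs => ?_
  rw [interior_Ioi] at hs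
  have hsb : 0 < sinh (s * b) := sinh_pos_iff.2 (mul_pos hs hb)
  have hda : HasDerivAt (fun s => sinh (s * a)) (cosh (s * a) * a) s := by
    simpa using (hasDerivAt_mul_const a).sinh
  have hdb : HasDerivAt (fun s => sinh (s * b)) (cosh (s * b) * b) s := by
    simpa using (hasDerivAt_mul_const b).sinh
  have hd : HasDerivAt (fun s => sinh (s * a) / sinh (s * b)) _ s := hda.div hdb hsb.ne'
  rw [hd.deriv]
  refine div_neg_of_neg_of_pos ?_ (pow_pos hsb 2)
  have := mul_cosh_mul_sinh_lt (mul_pos hs ha) (mul_lt_mul_of_pos_left hab hs)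
  nlinarith [mem_Ioi.1 hs]

end Real

lemma countable_preimage_singleton_of_even_of_injOn {β : Type*} {g : ℝ → β}
    (heven : ∀ x, g (-x) = g x) (hinj : InjOn g (Ioi 0)) (c : β) : (g ⁻¹' {c}).Countable := by
  set P := g ⁻¹' {c} ∩ Ioi 0
  have hP : P.Subsingleton := fun x hx y hy => hinj hx.2 hy.2 (hx.1.trans hy.1.symm)
  have hsub : g ⁻¹' {c} ⊆ {0} ∪ P ∪ Neg.neg '' P := by
    intro s hs
    rcases lt_trichotomy s 0 with h | h | h
    · exact Or.inr ⟨-s, ⟨by simpa [heven] using hs, neg_pos.2 h⟩, neg_neg s⟩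
    · exact Or.inl (Or.inl h)
    · exact Or.inl (Or.inr ⟨hs, h⟩)
  exact (((countable_singleton 0).union hP.countable).union (hP.countable.image _)).mono hsub

lemma measure_setOf_ofReal_eq_eq_zero {μ : Measure ℝ} (hμ : μ ≪ volume) {g : ℝ → ℝ}
    (hg : ∀ c, (g ⁻¹' {c}).Countable) (z : ℂ) : μ {x | (g x : ℂ) = z} = 0 :=
  hμ <| measure_mono_null (fun x (hx : (g x : ℂ) = z) => by simp [← hx])
    ((hg z.re).measure_zero volume)

lemma MeasureTheory.Lp.eq_zero_of_smul_ae_eq_mul {α 𝕜 : Type*} [MeasurableSpace α]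
    {μ : Measure α} [NormedField 𝕜] {p : ENNReal} {u : Lp 𝕜 p μ} {φ : α → 𝕜} {c : 𝕜}
    (hφ : μ {x | φ x = c} = 0) (h : ((c • u : Lp 𝕜 p μ) : α → 𝕜) =ᵐ[μ] fun x => φ x * u x) :
    u = 0 := by
  refine Lp.eq_zero_iff_ae_eq_zero.2 ?_
  filter_upwards [h, Lp.coeFn_smul c u, measure_eq_zero_iff_ae_notMem.1 hφ]
    with x hx hsmul hne
  rw [hsmul, Pi.smul_apply, smul_eq_mul] at hx
  by_contra hu
  exact hne (mul_right_cancel₀ hu hx).symm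

lemma eta_neg (θ₀ s : ℝ) : eta θ₀ (-s) = eta θ₀ s := by
  rcases eq_or_ne s 0 with rfl | hs
  · rw [neg_zero]
  · simp only [eta, neg_eq_zero, hs, if_false, neg_mul, Real.sinh_neg, mul_neg, neg_div_neg_eq]

lemma eta_strictAntiOn {θ₀ : ℝ} (h0 : 0 < θ₀) (h1 : θ₀ < π / 2) :
    StrictAntiOn (eta θ₀) (Ioi 0) := by
  have hK := Real.strictAntiOn_sinh_mul_div_sinh_mul (a := π - 2 * θ₀) (b := π)
    (by linarith) (by linarith)
  intro s hs t ht hst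
  have h := hK hs ht hst
  simp only [eta, if_neg (ne_of_gt (mem_Ioi.1 hs)), if_neg (ne_of_gt (mem_Ioi.1 ht)),
    mul_comm (2 : ℝ), ← div_div] at h ⊢
  linarith

lemma countable_eta_preimage_singleton {θ₀ : ℝ} (h0 : 0 < θ₀) (h1 : θ₀ < π / 2) (c : ℝ) :
    (eta θ₀ ⁻¹' {c}).Countable :=
  countable_preimage_singleton_of_even_of_injOn (eta_neg θ₀) (eta_strictAntiOn h0 h1).injOn c

lemma comp1_smul {θ₀ : ℝ} (c : ℂ) (f : WStar θ₀) : comp1 (c • f) = c • comp1 f := rfl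

lemma comp2_smul {θ₀ : ℝ} (c : ℂ) (f : WStar θ₀) : comp2 (c • f) = c • comp2 f := rfl

lemma WStar.eq_zero_of_comp_eq_zero {θ₀ : ℝ} {f : WStar θ₀} (h₁ : comp1 f = 0)
    (h₂ : comp2 f = 0) : f = 0 :=
  (WithLp.equiv 2 _).injective (Prod.ext h₁ h₂)

/-- `𝕂*` has empty point spectrum: if `𝕂* f = λ f` for some `f ∈ W*` and
`λ ∈ ℂ`, then `f = 0`. -/
theorem statement11 (θ₀ : ℝ) (h0 : 0 < θ₀) (h1 : θ₀ < π / 2)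
    (T : WStar θ₀ →L[ℂ] WStar θ₀) (hT : IsNPMult θ₀ T)
    (f : WStar θ₀) (l : ℂ) (hf : T f = l • f) :
    f = 0 := by
  have hlevel := countable_eta_preimage_singleton h0 h1
  have hlevel_neg (c : ℝ) : ((fun s => -eta θ₀ s) ⁻¹' {c}).Countable :=
    (hlevel (-c)).mono fun s (hs : -eta θ₀ s = c) => by simp [← hs]
  obtain ⟨h₁, h₂⟩ := hT f
  rw [hf, comp1_smul] at h₁
  rw [hf, comp2_smul] at h₂
  refine WStar.eq_zero_of_comp_eq_zero (Lp.eq_zero_of_smul_ae_eq_mul ?_ h₁)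
    (Lp.eq_zero_of_smul_ae_eq_mul ?_ h₂)
  · exact measure_setOf_ofReal_eq_eq_zero (withDensity_absolutelyContinuous _ _) hlevel l
  · simpa using measure_setOf_ofReal_eq_eq_zero (μ := mu2 θ₀)
      (withDensity_absolutelyContinuous _ _) hlevel_neg l
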